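/- If V : Σ → ℝ is a fixed point of the renormalization operator 𝓡 (i.e. 𝓡V = V) and V is integrable with respect to the unique shift-invariant measure μ_𝕂 on the Thue-Morse subshift 𝕂, then ∫_𝕂 V dμ_𝕂 = 0. -/

import Mathlib

/-!
The measure `ν = ½ (H_* μ + (σ ∘ H)_* μ)` is again a shift-invariant probability measure on `𝕂`:
`σ` maps the two halves into each other because `H ∘ σ = σ² ∘ H`, and `𝕂` is invariant under
`σ` and `H`. By unique ergodicity `ν = μ`, hence
`∫ V dμ = ∫ V dν = ½ ∫ (V ∘ σ ∘ H + V ∘ H) dμ = ½ ∫ 𝓡V dμ = ½ ∫ V dμ`.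
-/

open Filter Topology MeasureTheory

/-- The left shift on the full 2-shift `Σ = {0,1}^ℕ`. -/
def shift (x : ℕ → Bool) : ℕ → Bool := fun n => x (n + 1)

/-- The Thue–Morse substitution `H : 0 → 01, 1 → 10`, acting on sequences. -/
def subH (x : ℕ → Bool) : ℕ → Bool :=
  fun n => if n % 2 = 0 then x (n / 2) else !x (n / 2)

/-- The Thue–Morse sequence: `tm n` is the parity of the number of 1s in
the binary expansion of `n`. -/
def tm (n : ℕ) : Bool := (Nat.digits 2 n).count 1 % 2 == 1

/-- The fixed point of `subH` starting with 0. -/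
def rho0 : ℕ → Bool := tm

/-- The fixed point of `subH` starting with 1. -/
def rho1 : ℕ → Bool := fun n => !tm n

/-- `rhoB b` is the fixed point of `subH` starting with digit `b`. -/
def rhoB : Bool → ℕ → Bool
  | false => rho0
  | true => rho1

/-- The digit-flipping involution. -/
def flipSeq (x : ℕ → Bool) : ℕ → Bool := fun n => !x n

/-- Prepend a digit to a sequence. -/
def consTM (a : Bool) (x : ℕ → Bool) : ℕ → Bool
  | 0 => a
  | n + 1 => x n

/-- The Thue–Morse subshift: the closure of the shift orbit of `rho0`. -/
def TMK : Set (ℕ → Bool) := closure {y | ∃ n, y = shift^[n] rho0}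

/-- The renormalization operator `𝓡V = V ∘ σ ∘ H + V ∘ H`. -/
def RenOp (V : (ℕ → Bool) → ℝ) : (ℕ → Bool) → ℝ :=
  fun x => V (shift (subH x)) + V (subH x)

/-- The Birkhoff sum `S_k V = ∑_{i<k} V ∘ σⁱ`. -/
def birkhoff (V : (ℕ → Bool) → ℝ) (k : ℕ) (x : ℕ → Bool) : ℝ :=
  ∑ i ∈ Finset.range k, V (shift^[i] x)

/-- The potential `U_c`: value `c` on `[01]`, `-c` on `[10]`, `0` on `[00] ∪ [11]`. -/
def Upot (c : ℝ) (x : ℕ → Bool) : ℝ :=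
  if x 0 = false ∧ x 1 = true then c
  else if x 0 = true ∧ x 1 = false then -c else 0

/-- The sliding block code `π(x)_k = 1` iff `x_k ≠ x_{k+1}`. -/
def piTM (x : ℕ → Bool) : ℕ → Bool := fun n => x n != x (n + 1)

/-- The Feigenbaum substitution `0 → 11, 1 → 10`, acting on sequences. -/
def subHfeig (x : ℕ → Bool) : ℕ → Bool :=
  fun n => if n % 2 = 0 then true else !x (n / 2)

open ENNReal Set

section Renormalization

variable {α : Type*} [MeasurableSpace α] {T H : α → α} {μ : Measure α}

noncomputable def renormMeasure (T H : α → α) (μ : Measure α) : Measure α :=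
  (2 : ℝ≥0∞)⁻¹ • (μ.map H + μ.map (T ∘ H))

theorem renormMeasure_apply_eq_one [IsProbabilityMeasure μ] (hT : Measurable T)
    (hH : Measurable H) {s : Set α} (hs : MeasurableSet s) (hμs : μ s = 1)
    (hTs : MapsTo T s s) (hHs : MapsTo H s s) : renormMeasure T H μ s = 1 := by
  have preimage_eq_one {f : α → α} (hf : Measurable f) (hfs : MapsTo f s s) :
      μ.map f s = 1 := by
    rw [Measure.map_apply hf hs]
    exact le_antisymm prob_le_one (hμs ▸ measure_mono hfs)
  rw [renormMeasure, Measure.smul_apply, Measure.add_apply, preimage_eq_one hH hHs,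
    preimage_eq_one (hT.comp hH) (hTs.comp hHs), one_add_one_eq_two, smul_eq_mul,
    ENNReal.inv_mul_cancel two_ne_zero ofNat_ne_top]

theorem isProbabilityMeasure_renormMeasure [IsProbabilityMeasure μ] (hT : Measurable T)
    (hH : Measurable H) : IsProbabilityMeasure (renormMeasure T H μ) :=
  ⟨renormMeasure_apply_eq_one hT hH MeasurableSet.univ measure_univ (mapsTo_univ _ _)
    (mapsTo_univ _ _)⟩

/-- `T` exchanges the two halves: `T_* (T ∘ H)_* μ = (H ∘ T)_* μ = H_* μ`. -/
theorem measurePreserving_renormMeasure (hT : MeasurePreserving T μ μ) (hH : Measurable H)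
    (hcomm : H ∘ T = T ∘ T ∘ H) :
    MeasurePreserving T (renormMeasure T H μ) (renormMeasure T H μ) := by
  refine ⟨hT.measurable, ?_⟩
  rw [renormMeasure, Measure.map_smul, Measure.map_add _ _ hT.measurable,
    Measure.map_map hT.measurable hH, Measure.map_map hT.measurable (hT.measurable.comp hH),
    ← hcomm, ← Measure.map_map hH hT.measurable, hT.map_eq, add_comm]

theorem integral_renormMeasure (hT : Measurable T) (hH : Measurable H) {V : α → ℝ}
    (hV : Integrable V (renormMeasure T H μ)) :
    ∫ x, V x ∂renormMeasure T H μ = 2⁻¹ * ∫ x, (V (T (H x)) + V (H x)) ∂μ := by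
  have hTH : Measurable (T ∘ H) := hT.comp hH
  obtain ⟨hVH, hVTH⟩ := integrable_add_measure.1 <|
    (integrable_smul_measure (ENNReal.inv_ne_zero.2 ofNat_ne_top) (inv_ne_top.2 two_ne_zero)).1 hV
  have hVH' : Integrable (fun x => V (H x)) μ :=
    (integrable_map_measure hVH.aestronglyMeasurable hH.aemeasurable).1 hVH
  have hVTH' : Integrable (fun x => V (T (H x))) μ :=
    (integrable_map_measure hVTH.aestronglyMeasurable hTH.aemeasurable).1 hVTH
  rw [renormMeasure, integral_smul_measure, integral_add_measure hVH hVTH,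
    integral_map hH.aemeasurable hVH.aestronglyMeasurable,
    integral_map hTH.aemeasurable hVTH.aestronglyMeasurable, integral_add hVTH' hVH', toReal_inv,
    smul_eq_mul, add_comm]
  rfl

end Renormalization

theorem continuous_shift : Continuous shift :=
  continuous_pi fun n => continuous_apply (n + 1)

theorem continuous_subH : Continuous subH := by
  refine continuous_pi fun n => ?_
  by_cases h : n % 2 = 0
  · simpa [subH, h] using continuous_apply (n / 2)
  · simp only [subH, if_neg h]
    exact (continuous_of_discreteTopology (f := not)).comp (continuous_apply (n / 2))

theorem subH_comp_shift : subH ∘ shift = shift ∘ shift ∘ subH := by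
  funext x n
  simp only [Function.comp_apply, subH, shift]
  rw [show (n + 1 + 1) / 2 = n / 2 + 1 by omega, show (n + 1 + 1) % 2 = n % 2 by omega]

theorem subH_iterate_shift (k : ℕ) (x : ℕ → Bool) :
    subH (shift^[k] x) = shift^[2 * k] (subH x) := by
  induction k generalizing x with
  | zero => rfl
  | succ k ih =>
    rw [Function.iterate_succ_apply, ih, ← Function.comp_apply (f := subH), subH_comp_shift,
      mul_add, mul_one, Function.iterate_add_apply]
    rfl

theorem tm_two_mul (n : ℕ) : tm (2 * n) = tm n := by
  rcases Nat.eq_zero_or_pos n with rfl | hn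
  · rfl
  · simp [tm, Nat.digits_def' one_lt_two (by omega : 0 < 2 * n)]

theorem tm_two_mul_add_one (n : ℕ) : tm (2 * n + 1) = !tm n := by
  simp only [tm, Nat.digits_def' one_lt_two (by omega : 0 < 2 * n + 1),
    show (2 * n + 1) % 2 = 1 by omega, show (2 * n + 1) / 2 = n by omega, List.count_cons_self]
  rcases Nat.mod_two_eq_zero_or_one ((Nat.digits 2 n).count 1) with h | h <;>
    simp [Nat.add_mod, h]

theorem subH_rho0 : subH rho0 = rho0 := by
  funext n
  rcases Nat.even_or_odd' n with ⟨k, rfl | rfl⟩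
  · simp [subH, rho0, tm_two_mul]
  · simp [subH, rho0, tm_two_mul_add_one, Nat.add_mod, show (2 * k + 1) / 2 = k by omega]

theorem mapsTo_shift_TMK : MapsTo shift TMK TMK := by
  refine MapsTo.closure ?_ continuous_shift
  rintro _ ⟨n, rfl⟩
  exact ⟨n + 1, (Function.iterate_succ_apply' _ _ _).symm⟩

theorem mapsTo_subH_TMK : MapsTo subH TMK TMK := by
  refine MapsTo.closure ?_ continuous_subH
  rintro _ ⟨n, rfl⟩
  exact ⟨2 * n, by rw [subH_iterate_shift, subH_rho0]⟩

theorem measurableSet_TMK : MeasurableSet TMK := isClosed_closure.measurableSet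

/-- if `V` is a fixed point of `𝓡` which is integrable with respect to
the unique shift-invariant probability measure `μ` on the Thue–Morse subshift `𝕂`,
then `∫_𝕂 V dμ = 0`. -/
theorem stmt9 (mu : Measure (ℕ → Bool)) [IsProbabilityMeasure mu]
    (hinv : MeasurePreserving shift mu mu) (hK : mu TMK = 1)
    (huniq : ∀ nu : Measure (ℕ → Bool), IsProbabilityMeasure nu →
      MeasurePreserving shift nu nu → nu TMK = 1 → nu = mu)
    (V : (ℕ → Bool) → ℝ) (hV : Integrable V mu) (hfix : RenOp V = V) :
    ∫ x in TMK, V x ∂mu = 0 := by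
  have hshift := continuous_shift.measurable
  have hsubH := continuous_subH.measurable
  have hnu : renormMeasure shift subH mu = mu :=
    huniq _ (isProbabilityMeasure_renormMeasure hshift hsubH)
      (measurePreserving_renormMeasure hinv hsubH subH_comp_shift)
      (renormMeasure_apply_eq_one hshift hsubH measurableSet_TMK hK mapsTo_shift_TMK
        mapsTo_subH_TMK)
  have hhalf : ∫ x, V x ∂mu = 2⁻¹ * ∫ x, V x ∂mu := by
    conv_lhs => rw [← hnu]
    rw [integral_renormMeasure hshift hsubH (by rwa [hnu])]
    exact congrArg _ (integral_congr_ae (Eventually.of_forall (congrFun hfix)))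
  have hrestrict : mu.restrict TMK = mu :=
    Measure.restrict_eq_self_of_ae_mem
      ((ae_mem_iff_measure_eq measurableSet_TMK.nullMeasurableSet).2 (by rw [hK, measure_univ]))
  rw [hrestrict]
  linarith
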